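/- Let G be a connected bipartite graph with parts U and W where |U| = r, |W| = s, and 2^r ≤ s. Then λ(Ḡ) ≤ λ(G). -/

import Mathlib

noncomputable section
open Classical

variable {V : Type*}

/-- `S` is a distinguishing set of `G`. -/
def IsDistinguishing (G : SimpleGraph V) (S : Set V) : Prop :=
  ∀ u ∉ S, ∀ v ∉ S, u ≠ v → G.neighborSet u ∩ S ≠ G.neighborSet v ∩ S

/-- `S` is a dominating set of `G`. -/
def IsDominating (G : SimpleGraph V) (S : Set V) : Prop :=
  ∀ v ∉ S, ∃ u ∈ S, G.Adj v u

/-- `S` is a locating-dominating set of `G`. -/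
def IsLD (G : SimpleGraph V) (S : Set V) : Prop :=
  IsDistinguishing G S ∧ IsDominating G S

/-- The location-domination number of `G`. -/
def ldNum (G : SimpleGraph V) : ℕ :=
  sInf {n | ∃ S : Set V, S.ncard = n ∧ IsLD G S}

/-- The graph `G^S` associated with a distinguishing set `S`:
vertices outside `S` are adjacent iff their neighborhoods in `S`
differ in exactly one vertex (the label of the edge). -/
def assocGraph (G : SimpleGraph V) (S : Set V) : SimpleGraph V where
  Adj x y := x ∉ S ∧ y ∉ S ∧
    ∃ u, symmDiff (G.neighborSet x ∩ S) (G.neighborSet y ∩ S) = {u}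
  symm := by
    constructor
    rintro x y ⟨hx, hy, u, hu⟩
    exact ⟨hy, hx, u, by rwa [symmDiff_comm]⟩
  loopless := by
    constructor
    rintro x ⟨-, -, u, hu⟩
    rw [symmDiff_self] at hu
    exact (Set.singleton_ne_empty u) (by simpa using hu.symm)

/-- The edge `e` of `G^S` has label `u`. -/
def edgeLabelIs (G : SimpleGraph V) (S : Set V) (u : V) (e : Sym2 V) : Prop :=
  Sym2.lift ⟨fun x y => symmDiff (G.neighborSet x ∩ S) (G.neighborSet y ∩ S) = {u},
    fun x y => by simp only []; rw [symmDiff_comm]⟩ e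

/-- The number of edges with label `u` in a list of edges (e.g. of a walk in `G^S`). -/
def labelCount (G : SimpleGraph V) (S : Set V) (u : V) (l : List (Sym2 V)) : ℕ :=
  l.countP fun e => decide (edgeLabelIs G S u e)

/-- No edge of `H` lies on two distinct cycles: any two cycles sharing an edge
have the same edge set.  (This says precisely that every connected component of
`H` is a cactus.) -/
def NoEdgeOnTwoCycles {α : Type*} (H : SimpleGraph α) : Prop :=
  ∀ (x y : α) (p : H.Walk x x) (q : H.Walk y y), p.IsCycle → q.IsCycle →
    ∀ e ∈ p.edges, e ∈ q.edges → ∀ e', e' ∈ p.edges ↔ e' ∈ q.edges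

/-- A cactus is a connected graph in which no edge lies on two distinct cycles. -/
def IsCactus {α : Type*} (H : SimpleGraph α) : Prop :=
  H.Connected ∧ NoEdgeOnTwoCycles H

/-- `x` and `y` are twins in `G`. -/
def Twins (G : SimpleGraph V) (x y : V) : Prop :=
  G.neighborSet x = G.neighborSet y ∨
    G.neighborSet x ∪ {x} = G.neighborSet y ∪ {y}

/-- `x` and `y` are twins in the vertex-deleted graph `G - u`. -/
def TwinsAvoid (G : SimpleGraph V) (u x y : V) : Prop :=
  G.neighborSet x \ {u} = G.neighborSet y \ {u} ∨
    (G.neighborSet x ∪ {x}) \ {u} = (G.neighborSet y ∪ {y}) \ {u}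

/-- `U, W` is a bipartition of `G` into two stable (independent) sets. -/
def BipartitionOf (G : SimpleGraph V) (U W : Set V) : Prop :=
  U ∪ W = Set.univ ∧ Disjoint U W ∧
    (∀ x ∈ U, ∀ y ∈ U, ¬ G.Adj x y) ∧ (∀ x ∈ W, ∀ y ∈ W, ¬ G.Adj x y)

/-!
Take a minimum locating-dominating set `S` of `G`. Distinguishing sets of `G` and of `Gᶜ` are the
same, since the `Gᶜ`-trace of a vertex outside `S` is the complement in `S` of its `G`-trace. So
`S` serves for `Gᶜ` unless some vertex `v ∉ S` is `G`-adjacent to all of `S`; then `S` lies in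
the part opposite to `v`. If `v ∈ W`, then `S ⊆ U` separates the `s` vertices of `W` by distinct
nonempty traces, so `s < 2 ^ r`. If `v ∈ U`, then `S = W`, and we trade `v` for a vertex
`w₀ ∈ W`: in `Gᶜ`, the set `{v} ∪ W \ {w₀}` is locating-dominating as soon as removing `w₀`
keeps the neighbourhoods of `U \ {v}` distinct. A pair of vertices of `U` rules out at most
one `w₀`, and `(r - 1) ^ 2 < 2 ^ r ≤ s` leaves a choice.
-/

open Set

theorem Set.eq_of_sdiff_singleton_eq {α : Type*} {s t : Set α} {a b : α} (hab : a ≠ b)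
    (ha : s \ {a} = t \ {a}) (hb : s \ {b} = t \ {b}) : s = t := by
  ext x
  rcases eq_or_ne x a with rfl | hxa
  · simpa [hab] using congrArg (x ∈ ·) hb
  · simpa [hxa] using congrArg (x ∈ ·) ha

theorem ncard_setOf_not_injOn_sdiff_singleton_le {ι α : Type*} (f : ι → Set α) {A : Set ι}
    (hA : A.Finite) (hf : InjOn f A) :
    {a | ¬ InjOn (fun i => f i \ {a}) A}.ncard ≤ A.ncard * A.ncard := by
  rcases A.eq_empty_or_nonempty with rfl | ⟨i, -⟩
  · simp
  have : Nonempty (ι × ι) := ⟨(i, i)⟩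
  have hpair : ∀ a ∈ {a | ¬ InjOn (fun i => f i \ {a}) A},
      ∃ p ∈ A ×ˢ A, p.1 ≠ p.2 ∧ f p.1 \ {a} = f p.2 \ {a} := by
    intro a ha
    simp only [InjOn, mem_ofPred_eq, not_forall] at ha
    obtain ⟨i, hi, j, hj, heq, hne⟩ := ha
    exact ⟨(i, j), ⟨hi, hj⟩, hne, heq⟩
  choose! p hpA hpne hpeq using hpair
  rw [← ncard_prod]
  refine ncard_le_ncard_of_injOn p hpA (fun a ha b hb hab => ?_) (hA.prod hA)
  by_contra hne
  exact hpne a ha (hf (hpA a ha).1 (hpA a ha).2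
    (eq_of_sdiff_singleton_eq hne (hpeq a ha) (hab ▸ hpeq b hb)))

theorem mul_self_lt_two_pow_succ (m : ℕ) : m * m < 2 ^ (m + 1) := by
  induction m with
  | zero => simp
  | succ n ih =>
    have hn : n + 1 ≤ 2 ^ n := Nat.lt_two_pow_self
    have hsplit : 2 ^ (n + 1 + 1) = 2 ^ (n + 1) + 2 ^ n + 2 ^ n := by ring
    nlinarith

namespace SimpleGraph

variable {G : SimpleGraph V} {S : Set V}

theorem compl_neighborSet_inter_of_notMem {u : V} (hu : u ∉ S) :
    Gᶜ.neighborSet u ∩ S = S \ (G.neighborSet u ∩ S) := by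
  ext x
  simp only [mem_inter_iff, mem_neighborSet, compl_adj, mem_sdiff]
  exact ⟨fun ⟨⟨_, hx⟩, hxS⟩ => ⟨hxS, fun h => hx h.1⟩,
    fun ⟨hxS, hx⟩ => ⟨⟨fun he => hu (he ▸ hxS), fun h => hx ⟨h, hxS⟩⟩, hxS⟩⟩

end SimpleGraph

open SimpleGraph

variable {G : SimpleGraph V} {S : Set V}

theorem neighborSet_inter_eq_of_compl {x y : V} (hx : x ∉ S) (hy : y ∉ S)
    (h : Gᶜ.neighborSet x ∩ S = Gᶜ.neighborSet y ∩ S) :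
    G.neighborSet x ∩ S = G.neighborSet y ∩ S := by
  rw [compl_neighborSet_inter_of_notMem hx, compl_neighborSet_inter_of_notMem hy] at h
  rw [← sdiff_sdiff_cancel_left inter_subset_right, h, sdiff_sdiff_cancel_left inter_subset_right]

theorem IsDistinguishing.compl (h : IsDistinguishing G S) : IsDistinguishing Gᶜ S :=
  fun x hx y hy hxy heq => h x hx y hy hxy (neighborSet_inter_eq_of_compl hx hy heq)

theorem IsDistinguishing.injOn_neighborSet (h : IsDistinguishing G S) :
    InjOn G.neighborSet Sᶜ := fun x hx y hy hxy =>
  by_contra fun hne => h x hx y hy hne (by rw [hxy])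

theorem exists_forall_adj_of_not_isDominating_compl (h : ¬ IsDominating Gᶜ S) :
    ∃ v ∉ S, ∀ u ∈ S, G.Adj v u := by
  simp only [IsDominating, compl_adj, not_forall, not_exists, not_and, exists_prop] at h
  obtain ⟨v, hv, h⟩ := h
  exact ⟨v, hv, fun u hu => by_contra fun hvu => h u hu (fun he => hv (he ▸ hu)) hvu⟩

theorem ldNum_le (h : IsLD G S) : ldNum G ≤ S.ncard :=
  Nat.sInf_le ⟨S, rfl, h⟩

theorem exists_isLD_ncard_eq_ldNum (G : SimpleGraph V) : ∃ S, IsLD G S ∧ S.ncard = ldNum G := by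
  have hne : {n | ∃ S : Set V, S.ncard = n ∧ IsLD G S}.Nonempty :=
    ⟨_, univ, rfl, fun u hu => absurd (mem_univ u) hu, fun v hv => absurd (mem_univ v) hv⟩
  obtain ⟨S, hS, hLD⟩ := Nat.sInf_mem hne
  exact ⟨S, hLD, hS⟩

theorem IsLD.ncard_lt_two_pow [Finite V] (h : IsLD G S) {T : Set V} (hT : Disjoint T S) :
    T.ncard < 2 ^ S.ncard := by
  have hmaps : ∀ x ∈ T, G.neighborSet x ∩ S ∈ 𝒫 S \ {∅} := by
    intro x hx
    obtain ⟨u, huS, hxu⟩ := h.2 x (hT.notMem_of_mem_left hx)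
    exact ⟨inter_subset_right, (nonempty_iff_ne_empty.mp ⟨u, hxu, huS⟩)⟩
  have hinj : InjOn (fun x => G.neighborSet x ∩ S) T := fun x hx y hy hxy =>
    by_contra fun hne => h.1 x (hT.notMem_of_mem_left hx) y (hT.notMem_of_mem_left hy) hne hxy
  have hle := ncard_le_ncard_of_injOn _ hmaps hinj
  rw [ncard_sdiff_singleton_of_mem (empty_subset S), ncard_powerset] at hle
  have := Nat.one_le_two_pow (n := S.ncard)
  omega

namespace BipartitionOf

variable {U W : Set V} (hbip : BipartitionOf G U W)
include hbip

theorem symm : BipartitionOf G W U :=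
  ⟨by rw [union_comm, hbip.1], hbip.2.1.symm, hbip.2.2.2, hbip.2.2.1⟩

theorem not_adj_of_mem_left {x y : V} (hx : x ∈ U) (hy : y ∈ U) : ¬ G.Adj x y :=
  hbip.2.2.1 x hx y hy

theorem mem_or_mem (x : V) : x ∈ U ∨ x ∈ W := by
  simpa [← mem_union] using hbip.1.symm ▸ mem_univ x

theorem notMem_right {x : V} (hx : x ∈ U) : x ∉ W :=
  hbip.2.1.notMem_of_mem_left hx

theorem mem_right_of_adj {x y : V} (hx : x ∈ U) (hxy : G.Adj x y) : y ∈ W :=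
  (hbip.mem_or_mem y).resolve_left fun hy => hbip.not_adj_of_mem_left hx hy hxy

theorem subset_right_of_forall_adj {v : V} (hv : v ∈ U) (h : ∀ u ∈ S, G.Adj v u) : S ⊆ W :=
  fun u hu => hbip.mem_right_of_adj hv (h u hu)

theorem eq_right_of_isDominating (hSW : S ⊆ W) (hdom : IsDominating G S) : S = W := by
  refine hSW.antisymm fun w hw => by_contra fun hwS => ?_
  obtain ⟨u, huS, hwu⟩ := hdom w hwS
  exact hbip.symm.not_adj_of_mem_left hw (hSW huS) hwu

theorem isLD_compl_insert_sdiff_singleton {v w₀ w₁ : V} (hv : v ∈ U) (hw₀ : w₀ ∈ W)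
    (hw₁ : w₁ ∈ W) (hw₁₀ : w₁ ≠ w₀) (hvw₀ : G.Adj v w₀)
    (hinj : InjOn (fun x => G.neighborSet x \ {w₀}) (U \ {v})) :
    IsLD Gᶜ (insert v (W \ {w₀})) := by
  set S := insert v (W \ {w₀})
  have hout : ∀ x ∉ S, x = w₀ ∨ x ∈ U \ {v} := by
    intro x hx
    simp only [S, mem_insert_iff, mem_sdiff, mem_singleton_iff, not_or, not_and_not_right] at hx
    exact (hbip.mem_or_mem x).symm.imp hx.2 fun hxU => ⟨hxU, hx.1⟩
  have hv_adj : v ∈ G.neighborSet w₀ ∩ S := ⟨hvw₀.symm, mem_insert v _⟩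
  have hv_not_adj : ∀ x ∈ U, v ∉ G.neighborSet x := fun x hx => hbip.not_adj_of_mem_left hx hv
  have htrace : ∀ x ∈ U, G.neighborSet x ∩ S = G.neighborSet x \ {w₀} := by
    intro x hx
    ext z
    simp only [S, mem_inter_iff, mem_insert_iff, mem_sdiff, mem_singleton_iff]
    constructor
    · rintro ⟨hxz, rfl | ⟨-, hz⟩⟩
      exacts [absurd hxz (hv_not_adj x hx), ⟨hxz, hz⟩]
    · rintro ⟨hxz, hz⟩
      exact ⟨hxz, Or.inr ⟨hbip.mem_right_of_adj hx hxz, hz⟩⟩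
  refine ⟨fun x hx y hy hxy heq => ?_, fun x hx => ?_⟩
  · replace heq := neighborSet_inter_eq_of_compl hx hy heq
    rcases hout x hx with rfl | hxU <;> rcases hout y hy with rfl | hyU
    · exact hxy rfl
    · exact hv_not_adj y hyU.1 (heq ▸ hv_adj).1
    · exact hv_not_adj x hxU.1 (heq ▸ hv_adj).1
    · exact hxy (hinj hxU hyU (by dsimp only; rw [← htrace x hxU.1, ← htrace y hyU.1, heq]))
  · rcases hout x hx with rfl | ⟨hxU, hxv⟩
    · exact ⟨w₁, mem_insert_of_mem v ⟨hw₁, hw₁₀⟩, hw₁₀.symm, hbip.symm.not_adj_of_mem_left hw₀ hw₁⟩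
    · exact ⟨v, mem_insert v _, hxv, hbip.not_adj_of_mem_left hxU hv⟩

theorem ldNum_compl_le_ncard_right [Finite V] (hpow : 2 ^ U.ncard ≤ W.ncard)
    (hdist : IsDistinguishing G W) {v : V} (hv : v ∈ U) (hadj : ∀ w ∈ W, G.Adj v w) :
    ldNum Gᶜ ≤ W.ncard := by
  have hinj : InjOn G.neighborSet (U \ {v}) :=
    hdist.injOn_neighborSet.mono fun x hx => hbip.notMem_right hx.1
  obtain ⟨w₀, hw₀, hgood⟩ :
      ∃ w₀ ∈ W, w₀ ∉ {a | ¬ InjOn (fun x => G.neighborSet x \ {a}) (U \ {v})} := by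
    refine exists_mem_notMem_of_ncard_lt_ncard (lt_of_lt_of_le ?_ hpow)
    calc _ ≤ (U \ {v}).ncard * (U \ {v}).ncard :=
          ncard_setOf_not_injOn_sdiff_singleton_le _ (toFinite _) hinj
      _ < 2 ^ ((U \ {v}).ncard + 1) := mul_self_lt_two_pow_succ _
      _ = 2 ^ U.ncard := by rw [ncard_sdiff_singleton_add_one hv]
  obtain ⟨w₁, hw₁, hw₁₀⟩ : ∃ w₁ ∈ W, w₁ ≠ w₀ :=
    exists_ne_of_one_lt_ncard ((Nat.one_lt_two_pow (ncard_ne_zero_of_mem hv)).trans_le hpow) w₀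
  calc ldNum Gᶜ ≤ (insert v (W \ {w₀})).ncard :=
        ldNum_le (hbip.isLD_compl_insert_sdiff_singleton hv hw₀ hw₁ hw₁₀ (hadj w₀ hw₀)
          (by simpa using hgood))
    _ = W.ncard := ncard_exchange (hbip.notMem_right hv) hw₀

end BipartitionOf

theorem ldNum_compl_le_of_pow_le_general [Fintype V] (G : SimpleGraph V) (U W : Set V)
    (hbip : BipartitionOf G U W) (r s : ℕ)
    (hU : U.ncard = r) (hW : W.ncard = s) (hpow : 2 ^ r ≤ s) :
    ldNum Gᶜ ≤ ldNum G := by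
  subst hU hW
  obtain ⟨S, hS, hcard⟩ := exists_isLD_ncard_eq_ldNum G
  rw [← hcard]
  by_cases hdom : IsDominating Gᶜ S
  · exact ldNum_le ⟨hS.1.compl, hdom⟩
  obtain ⟨v, -, hvS⟩ := exists_forall_adj_of_not_isDominating_compl hdom
  rcases hbip.mem_or_mem v with hv | hv
  · obtain rfl := hbip.eq_right_of_isDominating (hbip.subset_right_of_forall_adj hv hvS) hS.2
    exact hbip.ldNum_compl_le_ncard_right hpow hS.1 hv hvS
  · have hSU := hbip.symm.subset_right_of_forall_adj hv hvS
    have hW_lt := hS.ncard_lt_two_pow (hbip.2.1.symm.mono_right hSU)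
    have := Nat.pow_le_pow_right two_pos (ncard_le_ncard hSU)
    omega

theorem ldNum_compl_le_of_pow_le [Fintype V] (G : SimpleGraph V) (U W : Set V)
    (hbip : BipartitionOf G U W) (hconn : G.Connected) (r s : ℕ)
    (hU : U.ncard = r) (hW : W.ncard = s) (hpow : 2 ^ r ≤ s) :
    ldNum Gᶜ ≤ ldNum G :=
  ldNum_compl_le_of_pow_le_general G U W hbip r s hU hW hpow

end
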